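/- Let L = A_2 and h the reflection r_{v_1} (h(v_1) = -v_1, h(v_2) = v_1 + v_2). Then K = M + N is spanned by {(v_1,0),(0,v_1),(v_2,v_2)}, has determinant 12, and is isometric to the even sublattice of the rectangular lattice Z² ⊥ √3·Z. -/

import Mathlib

/-!
The reflection `h` fixes the `v₂`-coordinate, so `K` lies in the lattice of pairs `(x, y)` with
equal `v₂`-coordinates. Since `(v₂, h v₂) - (v₂, v₂) = (0, v₁)`, `K` contains `(v₁, 0)`,
`(0, v₁)` and `(v₂, v₂)`, which span that lattice. Writing its vectors as
`(a v₁ + b v₂, c v₁ + b v₂)`, the norm is `2a² + 2c² + 4b² - 2ab - 2bc`, which is the norm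
`p² + q² + 3r²` of `(p, q, r) = (a + c - b, a - c, b)`. This map is injective with image the
vectors with `p + q + r` even, i.e. (as `p² + q² + 3r² ≡ p + q + r mod 2`) the even sublattice.
-/

/-- The `A₂` bilinear form in coordinates with respect to the standard basis
`v₁, v₂` (Gram matrix `[[2,-1],[-1,2]]`). -/
def A2form (x y : Fin 2 → ℤ) : ℤ :=
  2 * x 0 * y 0 - x 0 * y 1 - x 1 * y 0 + 2 * x 1 * y 1

/-- The form on `A₂ ⊥ A₂` in coordinates. -/
def A2form2 (x y : (Fin 2 → ℤ) × (Fin 2 → ℤ)) : ℤ := A2form x.1 y.1 + A2form x.2 y.2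

/-- The bilinear form of the rectangular lattice `ℤ² ⊥ √3·ℤ`. -/
def Rform (x y : Fin 3 → ℤ) : ℤ := x 0 * y 0 + x 1 * y 1 + 3 * (x 2 * y 2)

/-- The even sublattice of the rectangular lattice `ℤ² ⊥ √3·ℤ`. -/
def Esub : Submodule ℤ (Fin 3 → ℤ) where
  carrier := {x | Even (Rform x x)}
  zero_mem' := by simp [Rform]
  add_mem' := by
    intro a b ha hb
    have h : Rform (a + b) (a + b) = Rform a a + Rform b b + 2 * Rform a b := by
      simp only [Rform, Pi.add_apply]; ring
    simp only [Set.mem_setOf_eq] at *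
    rw [h]
    exact (ha.add hb).add (even_two_mul _)
  smul_mem' := by
    intro c x hx
    have h : Rform (c • x) (c • x) = c * c * Rform x x := by
      simp only [Rform, Pi.smul_apply, smul_eq_mul]; ring
    simp only [Set.mem_setOf_eq] at *
    rw [h]
    exact hx.mul_left _

def sameSecondCoord : Submodule ℤ ((Fin 2 → ℤ) × (Fin 2 → ℤ)) where
  carrier := {p | p.1 1 = p.2 1}
  zero_mem' := rfl
  add_mem' {p q} hp hq := by simp_all
  smul_mem' c p hp := by simp_all

@[simp]
lemma mem_sameSecondCoord {p : (Fin 2 → ℤ) × (Fin 2 → ℤ)} :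
    p ∈ sameSecondCoord ↔ p.1 1 = p.2 1 := Iff.rfl

lemma range_diag_sup_range_graph_eq_sameSecondCoord (h : (Fin 2 → ℤ) →ₗ[ℤ] (Fin 2 → ℤ))
    (hh : ∀ x : Fin 2 → ℤ, h x = ![x 1 - x 0, x 1]) :
    LinearMap.range (LinearMap.id.prod LinearMap.id) ⊔ LinearMap.range (LinearMap.id.prod h) =
      sameSecondCoord := by
  apply le_antisymm
  · refine sup_le ?_ ?_
    · rintro _ ⟨x, rfl⟩
      simp
    · rintro _ ⟨x, rfl⟩
      simp [hh]
  · rintro ⟨x, y⟩ (hxy : x 1 = y 1)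
    let w : Fin 2 → ℤ := ![0, y 0 - x 0]
    refine Submodule.mem_sup.mpr ⟨(x - w, x - w), ⟨x - w, rfl⟩, (w, h w), ⟨w, rfl⟩, ?_⟩
    rw [hh]
    ext i <;> fin_cases i <;> simp [w, Matrix.vecHead, Matrix.vecTail, hxy]

lemma span_eq_sameSecondCoord :
    Submodule.span ℤ (Set.range ![((![1, 0], ![0, 0]) : (Fin 2 → ℤ) × (Fin 2 → ℤ)),
      (![0, 0], ![1, 0]), (![0, 1], ![0, 1])]) = sameSecondCoord := by
  apply le_antisymm
  · rw [Submodule.span_le]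
    rintro _ ⟨i, rfl⟩
    fin_cases i <;> simp
  · rintro ⟨x, y⟩ (hxy : x 1 = y 1)
    have hcomb : (x, y) = x 0 • (![1, 0], ![0, 0]) + y 0 • (![0, 0], ![1, 0]) +
        x 1 • ((![0, 1], ![0, 1]) : (Fin 2 → ℤ) × (Fin 2 → ℤ)) := by
      ext i <;> fin_cases i <;> simp [hxy]
    rw [hcomb]
    refine add_mem (add_mem ?_ ?_) ?_ <;>
      exact Submodule.smul_mem _ _ (Submodule.subset_span (by simp))

def toRect : ((Fin 2 → ℤ) × (Fin 2 → ℤ)) →ₗ[ℤ] (Fin 3 → ℤ) where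
  toFun p := ![p.1 0 + p.2 0 - p.1 1, p.1 0 - p.2 0, p.1 1]
  map_add' p q := by ext i; fin_cases i <;> simp <;> ring
  map_smul' c p := by ext i; fin_cases i <;> simp <;> ring

lemma Rform_toRect {p q : (Fin 2 → ℤ) × (Fin 2 → ℤ)} (hp : p ∈ sameSecondCoord)
    (hq : q ∈ sameSecondCoord) : Rform (toRect p) (toRect q) = A2form2 p q := by
  simp only [mem_sameSecondCoord] at hp hq
  simp only [Rform, A2form2, A2form, toRect, LinearMap.coe_mk, AddHom.coe_mk,
    Matrix.cons_val_zero, Matrix.cons_val_one, Matrix.cons_val_two, Matrix.head_cons,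
    Matrix.tail_cons]
  rw [hp, hq]
  ring

lemma even_A2form_self (x : Fin 2 → ℤ) : Even (A2form x x) :=
  ⟨x 0 * x 0 - x 0 * x 1 + x 1 * x 1, by unfold A2form; ring⟩

lemma toRect_mem_Esub {p : (Fin 2 → ℤ) × (Fin 2 → ℤ)} (hp : p ∈ sameSecondCoord) :
    toRect p ∈ Esub := by
  show Even (Rform (toRect p) (toRect p))
  rw [Rform_toRect hp hp]
  exact (even_A2form_self p.1).add (even_A2form_self p.2)

lemma even_add_add_of_even_Rform_self {x : Fin 3 → ℤ} (hx : Even (Rform x x)) :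
    Even (x 0 + x 1 + x 2) := by
  simp only [Rform] at hx
  simpa [Int.even_add, Int.even_mul, show ¬ Even (3 : ℤ) by decide] using hx

def sameSecondCoordEquivEsub : sameSecondCoord ≃ₗ[ℤ] Esub where
  toFun p := ⟨toRect p, toRect_mem_Esub p.2⟩
  map_add' p q := Subtype.ext (toRect.map_add p q)
  map_smul' c p := Subtype.ext (toRect.map_smul c p)
  -- the division is exact on `Esub`, where `x 0 + x 1 + x 2` is even
  invFun x := ⟨(![(x.1 0 + x.1 1 + x.1 2) / 2, x.1 2],
      ![(x.1 0 + x.1 1 + x.1 2) / 2 - x.1 1, x.1 2]), by simp⟩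
  left_inv := by
    rintro ⟨⟨x, y⟩, hxy : x 1 = y 1⟩
    ext i <;> fin_cases i <;> simp [toRect] <;> omega
  right_inv := by
    rintro ⟨x, hx⟩
    obtain ⟨k, hk⟩ := even_add_add_of_even_Rform_self hx
    ext i
    fin_cases i <;> simp [toRect]
    omega

/-- For `L = A₂` (coordinates w.r.t. the basis `v₁, v₂`, so
`v₁ = ![1,0]`, `v₂ = ![0,1]`) and `h = r_{v₁}` (`h v₁ = -v₁`, `h v₂ = v₁ + v₂`),
the lattice `K = M + N` is spanned by `{(v₁,0), (0,v₁), (v₂,v₂)}`, has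
determinant `12`, and is isometric to the even sublattice of the rectangular
lattice `ℤ² ⊥ √3·ℤ`. -/
theorem stmt_11
    (h : (Fin 2 → ℤ) →ₗ[ℤ] (Fin 2 → ℤ))
    (hh : ∀ x : Fin 2 → ℤ, h x = ![x 1 - x 0, x 1])
    (M N K : Submodule ℤ ((Fin 2 → ℤ) × (Fin 2 → ℤ)))
    (hM : M = LinearMap.range ((LinearMap.id : (Fin 2 → ℤ) →ₗ[ℤ] (Fin 2 → ℤ)).prod LinearMap.id))
    (hN : N = LinearMap.range ((LinearMap.id : (Fin 2 → ℤ) →ₗ[ℤ] (Fin 2 → ℤ)).prod h))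
    (hK : K = M ⊔ N)
    (g : Fin 3 → (Fin 2 → ℤ) × (Fin 2 → ℤ))
    (hg : g = ![(![1, 0], ![0, 0]), (![0, 0], ![1, 0]), (![0, 1], ![0, 1])]) :
    K = Submodule.span ℤ (Set.range g) ∧
    (Matrix.of fun i j : Fin 3 => A2form2 (g i) (g j)).det = 12 ∧
    ∃ e : K ≃ₗ[ℤ] Esub, ∀ v w : K,
      A2form2 (v : (Fin 2 → ℤ) × (Fin 2 → ℤ)) (w : (Fin 2 → ℤ) × (Fin 2 → ℤ)) =
        Rform ((e v : Fin 3 → ℤ)) ((e w : Fin 3 → ℤ)) := by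
  have hK' : K = sameSecondCoord := by
    rw [hK, hM, hN, range_diag_sup_range_graph_eq_sameSecondCoord h hh]
  subst hg hK'
  refine ⟨span_eq_sameSecondCoord.symm, ?_, sameSecondCoordEquivEsub, fun v w => ?_⟩
  · simp [Matrix.det_fin_three, A2form2, A2form]
  · exact (Rform_toRect v.2 w.2).symm
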